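/- Let η = (K1, K2, K3, K4, κ3, κ6, κ9, κ12) be a tuple of positive real parameters with a(η) > 0 and b(η) < 0. If −b(η) ≤ 4·K2^{−1}·(K1^2·K2^3·K3·K4^2·κ3·κ6^2·κ9^2·κ12·a(η))^{1/4} + 3·(K1·K4^2·κ6^2·κ9^2·a(η))^{1/3} + 2·(K2·K3·κ3·κ12·a(η))^{1/2} + 3·K3^{−1}·(K1^2·K2·K3^2·K4·κ3·κ6^2·κ9^2·κ12)^{1/3}, then p_{η,H}(x1,x3) ≥ 0 for all x1 > 0, x3 > 0. -/

import Mathlib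

/-!
Besides the term `b(η) · K1 K2 K3 κ3 κ6 κ12 · x1² x3`, `p_{η,H}` has only monomials with positive
coefficients. Splitting the two coefficients with a factor 2, their exponents fall into four
groups whose barycentres are all `(2, 1)`, so by AM-GM each group is at least its size times the
geometric mean of its terms, a constant multiple of `x1² x3`. The four constants add up to
`K1 K2 K3 κ3 κ6 κ12` times the right-hand side of the hypothesis, which therefore makes the
coefficient of `x1² x3` in the resulting lower bound nonnegative.
-/

open Finset

/-- The bivariate polynomial `p_{η,H}` supported on the hexagonal face `H`. -/
def pEtaH (K1 K2 K3 K4 κ3 κ6 κ9 κ12 x1 x3 : ℝ) : ℝ :=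
  K2 * κ3 * (κ3 * κ12 - κ6 * κ9) *
      (K2 * K4 * κ3 * κ9 * x1 ^ 4 * x3 ^ 2 + K1 * K3 * κ6 * κ12 * x1 ^ 2 * x3 ^ 2
        + K2 * K3 * κ3 * κ12 * x1 ^ 3 * x3 ^ 2)
    + K1 * K2 * K3 * κ3 * κ6 * κ12 * ((K2 + K3) * κ3 * κ12 - (K1 + K4) * κ6 * κ9)
        * x1 ^ 2 * x3
    + K1 * κ6 *
        (K2 ^ 2 * K4 * κ3 ^ 2 * κ9 ^ 2 * x1 ^ 4 * x3
          + 2 * K2 * K3 * K4 * κ3 ^ 2 * κ9 * κ12 * x1 ^ 3 * x3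
          + K1 * K2 * K3 * K4 * κ3 * κ6 * κ9 * κ12 * x1 ^ 2
          + 2 * K1 * K2 * K3 * κ3 * κ6 * κ12 ^ 2 * x1 * x3
          + K1 * K2 * K3 ^ 2 * κ3 * κ6 * κ12 ^ 2 * x1
          + K1 * K3 ^ 2 * κ6 ^ 2 * κ12 ^ 2 * x3
          + K1 ^ 2 * K3 ^ 2 * κ6 ^ 2 * κ12 ^ 2)

theorem card_mul_le_sum_of_pow_card_le_prod {ι : Type*} (s : Finset ι) {u : ι → ℝ} {g : ℝ}
    (hu : ∀ i ∈ s, 0 ≤ u i) (hg : g ^ #s ≤ ∏ i ∈ s, u i) : #s * g ≤ ∑ i ∈ s, u i := by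
  rcases lt_or_ge g 0 with hg0 | hg0
  · exact (mul_nonpos_of_nonneg_of_nonpos (Nat.cast_nonneg _) hg0.le).trans (sum_nonneg hu)
  rcases s.eq_empty_or_nonempty with rfl | hs
  · simp
  have hn : #s ≠ 0 := card_ne_zero.mpr hs
  have amgm := Real.geom_mean_le_arith_mean_weighted s (fun _ ↦ (#s : ℝ)⁻¹) u
    (fun _ _ ↦ by positivity) (by simp [hn]) hu
  rw [Real.finsetProd_rpow s u hu, ← mul_sum] at amgm
  have hg_le : g ≤ (∏ i ∈ s, u i) ^ (#s : ℝ)⁻¹ :=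
    calc g = (g ^ #s) ^ (#s : ℝ)⁻¹ := (Real.pow_rpow_inv_natCast hg0 hn).symm
      _ ≤ _ := by gcongr
  have hn' : (0 : ℝ) < #s := by positivity
  calc (#s : ℝ) * g ≤ #s * ((#s : ℝ)⁻¹ * ∑ i ∈ s, u i) := by gcongr; exact hg_le.trans amgm
    _ = ∑ i ∈ s, u i := by field_simp

theorem three_mul_le_add_add_of_pow_three_le_mul {u v w g : ℝ} (hu : 0 ≤ u) (hv : 0 ≤ v)
    (hw : 0 ≤ w) (hg : g ^ 3 ≤ u * v * w) : 3 * g ≤ u + v + w := by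
  simpa [Fin.sum_univ_three, Fin.prod_univ_three, add_assoc, mul_assoc] using
    card_mul_le_sum_of_pow_card_le_prod univ (u := ![u, v, w]) (g := g)
      (by simp [Fin.forall_fin_succ, *]) (by simpa [Fin.prod_univ_three, mul_assoc] using hg)

theorem four_mul_le_add_add_add_of_pow_four_le_mul {u v w z g : ℝ} (hu : 0 ≤ u) (hv : 0 ≤ v)
    (hw : 0 ≤ w) (hz : 0 ≤ z) (hg : g ^ 4 ≤ u * v * w * z) : 4 * g ≤ u + v + w + z := by
  simpa [Fin.sum_univ_four, Fin.prod_univ_four, add_assoc, mul_assoc] using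
    card_mul_le_sum_of_pow_card_le_prod univ (u := ![u, v, w, z]) (g := g)
      (by simp [Fin.forall_fin_succ, *]) (by simpa [Fin.prod_univ_four, mul_assoc] using hg)

theorem rpow_one_div_pow_of_nonneg {x : ℝ} (hx : 0 ≤ x) {n : ℕ} (hn : n ≠ 0) :
    (x ^ ((1 : ℝ) / n)) ^ n = x := by
  rw [one_div]; exact Real.rpow_inv_natCast_pow hx hn

theorem mul_add_le_pEtaH_of_pow_eq {K1 K2 K3 K4 κ3 κ6 κ9 κ12 x1 x3 r1 r2 r3 r4 : ℝ}
    (hK1 : 0 ≤ K1) (hK2 : 0 < K2) (hK3 : 0 < K3) (hK4 : 0 ≤ K4)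
    (hκ3 : 0 ≤ κ3) (hκ6 : 0 ≤ κ6) (hκ9 : 0 ≤ κ9) (hκ12 : 0 ≤ κ12)
    (ha : 0 ≤ κ3 * κ12 - κ6 * κ9) (hx1 : 0 ≤ x1) (hx3 : 0 ≤ x3)
    (hr1 : r1 ^ 4 = K1 ^ 2 * K2 ^ 3 * K3 * K4 ^ 2 * κ3 * κ6 ^ 2 * κ9 ^ 2 * κ12
      * (κ3 * κ12 - κ6 * κ9))
    (hr2 : r2 ^ 3 = K1 * K4 ^ 2 * κ6 ^ 2 * κ9 ^ 2 * (κ3 * κ12 - κ6 * κ9))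
    (hr3 : r3 ^ 2 = K2 * K3 * κ3 * κ12 * (κ3 * κ12 - κ6 * κ9))
    (hr4 : r4 ^ 3 = K1 ^ 2 * K2 * K3 ^ 2 * K4 * κ3 * κ6 ^ 2 * κ9 ^ 2 * κ12) :
    K1 * K2 * K3 * κ3 * κ6 * κ12 * x1 ^ 2 * x3 *
        ((K2 + K3) * κ3 * κ12 - (K1 + K4) * κ6 * κ9
          + (4 * K2⁻¹ * r1 + 3 * r2 + 2 * r3 + 3 * K3⁻¹ * r4))
      ≤ pEtaH K1 K2 K3 K4 κ3 κ6 κ9 κ12 x1 x3 := by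
  rw [pEtaH]
  set a := κ3 * κ12 - κ6 * κ9
  -- (2,1) = ((2,2) + 2 • (3,1) + (0,0)) / 4
  have circuit1 : 4 * (K1 * K3 * κ3 * κ6 * κ12 * r1 * x1 ^ 2 * x3) ≤
      K2 * κ3 * a * K1 * K3 * κ6 * κ12 * x1 ^ 2 * x3 ^ 2
        + K1 * κ6 * K2 * K3 * K4 * κ3 ^ 2 * κ9 * κ12 * x1 ^ 3 * x3
        + K1 * κ6 * K2 * K3 * K4 * κ3 ^ 2 * κ9 * κ12 * x1 ^ 3 * x3
        + K1 * κ6 * K1 ^ 2 * K3 ^ 2 * κ6 ^ 2 * κ12 ^ 2 :=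
    four_mul_le_add_add_add_of_pow_four_le_mul (by positivity) (by positivity) (by positivity)
      (by positivity) (by linear_combination (K1 * K3 * κ3 * κ6 * κ12 * x1 ^ 2 * x3) ^ 4 * hr1)
  -- (2,1) = ((4,2) + (2,0) + (0,1)) / 3
  have circuit2 : 3 * (K1 * K2 * K3 * κ3 * κ6 * κ12 * r2 * x1 ^ 2 * x3) ≤
      K2 * κ3 * a * K2 * K4 * κ3 * κ9 * x1 ^ 4 * x3 ^ 2
        + K1 * κ6 * K1 * K2 * K3 * K4 * κ3 * κ6 * κ9 * κ12 * x1 ^ 2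
        + K1 * κ6 * K1 * K3 ^ 2 * κ6 ^ 2 * κ12 ^ 2 * x3 :=
    three_mul_le_add_add_of_pow_three_le_mul (by positivity) (by positivity) (by positivity)
      (by linear_combination (K1 * K2 * K3 * κ3 * κ6 * κ12 * x1 ^ 2 * x3) ^ 3 * hr2)
  -- (2,1) = ((3,2) + (1,0)) / 2
  have circuit3 : 2 * (K1 * K2 * K3 * κ3 * κ6 * κ12 * r3 * x1 ^ 2 * x3) ≤
      K2 * κ3 * a * K2 * K3 * κ3 * κ12 * x1 ^ 3 * x3 ^ 2
        + K1 * κ6 * K1 * K2 * K3 ^ 2 * κ3 * κ6 * κ12 ^ 2 * x1 :=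
    two_mul_le_add_of_sq_le_mul (by positivity) (by positivity)
      (by linear_combination (K1 * K2 * K3 * κ3 * κ6 * κ12 * x1 ^ 2 * x3) ^ 2 * hr3)
  -- (2,1) = ((4,1) + 2 • (1,1)) / 3
  have circuit4 : 3 * (K1 * K2 * κ3 * κ6 * κ12 * r4 * x1 ^ 2 * x3) ≤
      K1 * κ6 * K2 ^ 2 * K4 * κ3 ^ 2 * κ9 ^ 2 * x1 ^ 4 * x3
        + K1 * κ6 * K1 * K2 * K3 * κ3 * κ6 * κ12 ^ 2 * x1 * x3
        + K1 * κ6 * K1 * K2 * K3 * κ3 * κ6 * κ12 ^ 2 * x1 * x3 :=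
    three_mul_le_add_add_of_pow_three_le_mul (by positivity) (by positivity) (by positivity)
      (by linear_combination (K1 * K2 * κ3 * κ6 * κ12 * x1 ^ 2 * x3) ^ 3 * hr4)
  linear_combination circuit1 + circuit2 + circuit3 + circuit4
    + 4 * K1 * K3 * κ3 * κ6 * κ12 * r1 * x1 ^ 2 * x3 * mul_inv_cancel₀ hK2.ne'
    + 3 * K1 * K2 * κ3 * κ6 * κ12 * r4 * x1 ^ 2 * x3 * mul_inv_cancel₀ hK3.ne'

noncomputable def pEtaHCircuitBound (K1 K2 K3 K4 κ3 κ6 κ9 κ12 : ℝ) : ℝ :=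
  4 * K2⁻¹ * (K1 ^ 2 * K2 ^ 3 * K3 * K4 ^ 2 * κ3 * κ6 ^ 2 * κ9 ^ 2 * κ12
        * (κ3 * κ12 - κ6 * κ9)) ^ ((1 : ℝ) / 4)
    + 3 * (K1 * K4 ^ 2 * κ6 ^ 2 * κ9 ^ 2 * (κ3 * κ12 - κ6 * κ9)) ^ ((1 : ℝ) / 3)
    + 2 * (K2 * K3 * κ3 * κ12 * (κ3 * κ12 - κ6 * κ9)) ^ ((1 : ℝ) / 2)
    + 3 * K3⁻¹ * (K1 ^ 2 * K2 * K3 ^ 2 * K4 * κ3 * κ6 ^ 2 * κ9 ^ 2 * κ12) ^ ((1 : ℝ) / 3)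

theorem mul_add_pEtaHCircuitBound_le_pEtaH {K1 K2 K3 K4 κ3 κ6 κ9 κ12 x1 x3 : ℝ}
    (hK1 : 0 ≤ K1) (hK2 : 0 < K2) (hK3 : 0 < K3) (hK4 : 0 ≤ K4)
    (hκ3 : 0 ≤ κ3) (hκ6 : 0 ≤ κ6) (hκ9 : 0 ≤ κ9) (hκ12 : 0 ≤ κ12)
    (ha : 0 ≤ κ3 * κ12 - κ6 * κ9) (hx1 : 0 ≤ x1) (hx3 : 0 ≤ x3) :
    K1 * K2 * K3 * κ3 * κ6 * κ12 * x1 ^ 2 * x3 *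
        ((K2 + K3) * κ3 * κ12 - (K1 + K4) * κ6 * κ9 + pEtaHCircuitBound K1 K2 K3 K4 κ3 κ6 κ9 κ12)
      ≤ pEtaH K1 K2 K3 K4 κ3 κ6 κ9 κ12 x1 x3 :=
  mul_add_le_pEtaH_of_pow_eq hK1 hK2 hK3 hK4 hκ3 hκ6 hκ9 hκ12 ha hx1 hx3
    (by exact_mod_cast rpow_one_div_pow_of_nonneg (by positivity) four_ne_zero)
    (by exact_mod_cast rpow_one_div_pow_of_nonneg (by positivity) three_ne_zero)
    (by exact_mod_cast rpow_one_div_pow_of_nonneg (by positivity) two_ne_zero)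
    (by exact_mod_cast rpow_one_div_pow_of_nonneg (by positivity) three_ne_zero)

theorem pEtaH_nonneg_of_cover10_general
    (K1 K2 K3 K4 κ3 κ6 κ9 κ12 : ℝ)
    (hK1 : 0 < K1) (hK2 : 0 < K2) (hK3 : 0 < K3) (hK4 : 0 < K4)
    (hκ3 : 0 < κ3) (hκ6 : 0 < κ6) (hκ9 : 0 < κ9) (hκ12 : 0 < κ12)
    (ha : 0 < κ3 * κ12 - κ6 * κ9)
    (hcond : -((K2 + K3) * κ3 * κ12 - (K1 + K4) * κ6 * κ9) ≤
      4 * K2⁻¹ * (K1 ^ 2 * K2 ^ 3 * K3 * K4 ^ 2 * κ3 * κ6 ^ 2 * κ9 ^ 2 * κ12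
            * (κ3 * κ12 - κ6 * κ9)) ^ ((1 : ℝ) / 4)
        + 3 * (K1 * K4 ^ 2 * κ6 ^ 2 * κ9 ^ 2 * (κ3 * κ12 - κ6 * κ9)) ^ ((1 : ℝ) / 3)
        + 2 * (K2 * K3 * κ3 * κ12 * (κ3 * κ12 - κ6 * κ9)) ^ ((1 : ℝ) / 2)
        + 3 * K3⁻¹ * (K1 ^ 2 * K2 * K3 ^ 2 * K4 * κ3 * κ6 ^ 2 * κ9 ^ 2 * κ12) ^ ((1 : ℝ) / 3)) :
    ∀ x1 x3 : ℝ, 0 < x1 → 0 < x3 → 0 ≤ pEtaH K1 K2 K3 K4 κ3 κ6 κ9 κ12 x1 x3 := by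
  intro x1 x3 hx1 hx3
  refine le_trans (mul_nonneg (by positivity) ?_) (mul_add_pEtaHCircuitBound_le_pEtaH hK1.le hK2
    hK3 hK4.le hκ3.le hκ6.le hκ9.le hκ12.le ha.le hx1.le hx3.le)
  rw [pEtaHCircuitBound]
  linarith

/-- Sufficient condition for nonnegativity of `p_{η,H}` on the positive
orthant coming from the pure cover. -/
theorem pEtaH_nonneg_of_cover10
    (K1 K2 K3 K4 κ3 κ6 κ9 κ12 : ℝ)
    (hK1 : 0 < K1) (hK2 : 0 < K2) (hK3 : 0 < K3) (hK4 : 0 < K4)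
    (hκ3 : 0 < κ3) (hκ6 : 0 < κ6) (hκ9 : 0 < κ9) (hκ12 : 0 < κ12)
    (ha : 0 < κ3 * κ12 - κ6 * κ9)
    (hb : (K2 + K3) * κ3 * κ12 - (K1 + K4) * κ6 * κ9 < 0)
    (hcond : -((K2 + K3) * κ3 * κ12 - (K1 + K4) * κ6 * κ9) ≤
      4 * K2⁻¹ * (K1 ^ 2 * K2 ^ 3 * K3 * K4 ^ 2 * κ3 * κ6 ^ 2 * κ9 ^ 2 * κ12
            * (κ3 * κ12 - κ6 * κ9)) ^ ((1 : ℝ) / 4)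
        + 3 * (K1 * K4 ^ 2 * κ6 ^ 2 * κ9 ^ 2 * (κ3 * κ12 - κ6 * κ9)) ^ ((1 : ℝ) / 3)
        + 2 * (K2 * K3 * κ3 * κ12 * (κ3 * κ12 - κ6 * κ9)) ^ ((1 : ℝ) / 2)
        + 3 * K3⁻¹ * (K1 ^ 2 * K2 * K3 ^ 2 * K4 * κ3 * κ6 ^ 2 * κ9 ^ 2 * κ12) ^ ((1 : ℝ) / 3)) :
    ∀ x1 x3 : ℝ, 0 < x1 → 0 < x3 → 0 ≤ pEtaH K1 K2 K3 K4 κ3 κ6 κ9 κ12 x1 x3 :=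
  pEtaH_nonneg_of_cover10_general K1 K2 K3 K4 κ3 κ6 κ9 κ12 hK1 hK2 hK3 hK4 hκ3 hκ6 hκ9 hκ12 ha hcond
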